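/- arXiv:1211.1102 — 3 statements merged into one kernel-verified Lean document; each statement's English description precedes it below -/
import Mathlib

section
/- Let (A_i, φ_{ij}) be a direct system of (not necessarily unital) rings over a directed index set I with direct limit A_∞ and canonical maps φ_{i,∞} : A_i → A_∞. If e, f are idempotents in A_i such that φ_{i,∞}(e) and φ_{i,∞}(f) are Murray–von Neumann equivalent in A_∞, then there exists j ≥ i in I such that φ_{ij}(e) and φ_{ij}(f) are Murray–von Neumann equivalent in A_j. -/
/-- Let `(A_i, φ_{ij})` be a direct system of (not necessarily unital) rings
over a directed index set `I` with direct limit `Alim` and canonical maps `φ_{i,∞}`.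
If `e, f` are idempotents in `A_i` whose images `φ_{i,∞}(e)` and `φ_{i,∞}(f)` are
Murray–von Neumann equivalent in `Alim`, then there is `j ≥ i` such that `φ_{ij}(e)` and
`φ_{ij}(f)` are Murray–von Neumann equivalent in `A_j`. -/
theorem equivalence_descends_to_finite_stage {I : Type} [Preorder I] [IsDirected I (· ≤ ·)]
    (A : I → Type) [∀ i, NonUnitalRing (A i)] (Alim : Type) [NonUnitalRing Alim]
    (φ : ∀ i j, i ≤ j → (A i →ₙ+* A j)) (φinf : ∀ i, A i →ₙ+* Alim)
    (hsys : ∀ i j k (hij : i ≤ j) (hjk : j ≤ k),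
      (φ j k hjk).comp (φ i j hij) = φ i k (hij.trans hjk))
    (hcompat : ∀ i j (h : i ≤ j), φinf i = (φinf j).comp (φ i j h))
    (hsurj : ∀ a : Alim, ∃ (k : I) (x : A k), φinf k x = a)
    (heq : ∀ i k (x : A i) (y : A k), φinf i x = φinf k y →
      ∃ (j : I) (hij : i ≤ j) (hkj : k ≤ j), φ i j hij x = φ k j hkj y)
    (i : I) (e f : A i) (he : e * e = e) (hf : f * f = f)
    (hequiv : ∃ x y : Alim, φinf i e = x * y ∧ φinf i f = y * x) :
    ∃ (j : I) (hij : i ≤ j), ∃ s t : A j,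
      φ i j hij e = s * t ∧ φ i j hij f = t * s := by
  obtain ⟨x, y, hxy, hyx⟩ := hequiv
  obtain ⟨k1, a, ha⟩ := hsurj x
  obtain ⟨k2, b, hb⟩ := hsurj y
  obtain ⟨m, hk1m, hk2m⟩ := directed_of (· ≤ ·) k1 k2
  set a' := φ k1 m hk1m a with ha'
  set b' := φ k2 m hk2m b with hb'
  have hax : φinf m a' = x := by
    rw [ha', ← ha, hcompat k1 m hk1m]; rfl
  have hbx : φinf m b' = y := by
    rw [hb', ← hb, hcompat k2 m hk2m]; rfl
  have h1 : φinf m (a' * b') = φinf i e := by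
    rw [map_mul, hax, hbx, hxy]
  have h2 : φinf m (b' * a') = φinf i f := by
    rw [map_mul, hax, hbx, hyx]
  obtain ⟨j1, hmj1, hij1, hj1⟩ := heq m i (a' * b') e h1
  obtain ⟨j2, hmj2, hij2, hj2⟩ := heq m i (b' * a') f h2
  obtain ⟨j, hj1j, hj2j⟩ := directed_of (· ≤ ·) j1 j2
  refine ⟨j, hij1.trans hj1j, φ m j (hmj1.trans hj1j) a', φ m j (hmj1.trans hj1j) b', ?_, ?_⟩
  · have key : φ i j (hij1.trans hj1j) e = φ j1 j hj1j (φ i j1 hij1 e) := by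
      rw [← hsys i j1 j hij1 hj1j]; simp
    rw [key, ← hj1, map_mul]
    congr 1 <;> · rw [← hsys m j1 j hmj1 hj1j]; simp
  · have key : φ i j (hij1.trans hj1j) f = φ j2 j hj2j (φ i j2 hij2 f) := by
      rw [← hsys i j2 j hij2 hj2j]; simp
    rw [key, ← hj2, map_mul]
    congr 1 <;> · rw [← hsys m j2 j hmj2 hj2j]; simp
end

section
/- Let E be a (possibly uncountable) directed graph and K a field, with Leavitt path algebra L_K(E) generated by a Leavitt E-family {p_v, t_e, t_e^*}. Then there is a well-defined monoid homomorphism γ_E from the graph monoid M̄_E to V[L_K(E)] sending the generator a_v to [p_v] for each vertex v, and sending a_{v,S} to [p_v − Σ_{e∈S} t_e t_e^*] for each infinite emitter v and non-empty finite subset S of edges emitted by v. -/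
open Matrix

/-- Square matrices of size `n` over `R`, the building blocks of `M_∞(R)`. -/
abbrev Mat (R : Type) [NonUnitalRing R] (n : ℕ) : Type := Matrix (Fin n) (Fin n) R

/-- The embedding `M_n(R) ⊆ M_N(R)`, `a ↦ a ⊕ 0`, realizing `M_∞(R) = ⋃ₙ M_n(R)`. -/
def pad {R : Type} [NonUnitalRing R] {n : ℕ} (N : ℕ) (a : Mat R n) : Mat R N :=
  Matrix.of fun i j =>
    if h : (i : ℕ) < n ∧ (j : ℕ) < n then a ⟨i, h.1⟩ ⟨j, h.2⟩ else 0

/-- Block-diagonal direct sum `a ⊕ b` of square matrices. -/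
def dsum {R : Type} [NonUnitalRing R] {n m : ℕ} (a : Mat R n) (b : Mat R m) :
    Mat R (n + m) :=
  Matrix.reindex finSumFinEquiv finSumFinEquiv (Matrix.fromBlocks a 0 0 b)

/-- Murray–von Neumann equivalence in `M_∞(R)`: `a ~ b` iff after embedding in a common
`M_N(R)` there are `x, y` with `a = x*y` and `b = y*x`. -/
def MvN {R : Type} [NonUnitalRing R] {n m : ℕ} (a : Mat R n) (b : Mat R m) : Prop :=
  ∃ N, n ≤ N ∧ m ≤ N ∧ ∃ x y : Mat R N, pad N a = x * y ∧ pad N b = y * x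

/-- An idempotent element of `M_∞(R)`: an idempotent `n × n` matrix for some `n`. -/
def IdemMat (R : Type) [NonUnitalRing R] : Type :=
  Σ n : ℕ, {a : Mat R n // IsIdempotentElem a}

/-- The defining relations of the monoid `V[R]` on the free commutative monoid
(`Multiset`) on the idempotent matrices: equivalent idempotents are identified,
`[a] + [b] = [a ⊕ b]`, and `[0] = 0`. -/
inductive VRel (R : Type) [NonUnitalRing R] :
    Multiset (IdemMat R) → Multiset (IdemMat R) → Prop
  | equiv (a b : IdemMat R) : MvN a.2.1 b.2.1 → VRel R {a} {b}
  | add (a b c : IdemMat R) : c.1 = a.1 + b.1 → HEq c.2.1 (dsum a.2.1 b.2.1) →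
      VRel R ({a} + {b}) {c}
  | zero (c : IdemMat R) : c.2.1 = (0 : Mat R c.1) → VRel R {c} 0

/-- The monoid `V[R]` of Murray–von Neumann equivalence classes of idempotent matrices. -/
def VMon (R : Type) [NonUnitalRing R] : Type := (addConGen (VRel R)).Quotient

noncomputable instance (R : Type) [NonUnitalRing R] : AddCommMonoid (VMon R) := by
  unfold VMon; infer_instance

/-- The class `[a] ∈ V[R]` of an idempotent matrix. -/
def cls {R : Type} [NonUnitalRing R] (a : IdemMat R) : VMon R :=
  (addConGen (VRel R)).mk' {a}

open Classical in
/-- The class in `V[R]` of an idempotent ring element, viewed as a `1 × 1` matrix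
(junk value `0` if the element is not idempotent). -/
noncomputable def clsE {R : Type} [NonUnitalRing R] (a : R) : VMon R :=
  if h : IsIdempotentElem (Matrix.of fun _ _ : Fin 1 => a) then cls ⟨1, _, h⟩ else 0

attribute [local instance] Classical.propDecidable

/-- A directed graph: vertices, edges, and source/range maps. -/
structure DGraph where
  V : Type
  E : Type
  s : E → V
  r : E → V

namespace DGraph

/-- The set of edges emitted by a vertex. -/
def emit (G : DGraph) (v : G.V) : Set G.E := {e | G.s e = v}

/-- A regular vertex: emits a nonzero finite number of edges. -/
def Regular (G : DGraph) (v : G.V) : Prop := (G.emit v).Finite ∧ (G.emit v).Nonempty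

/-- An infinite emitter: emits infinitely many edges. -/
def InfEmitter (G : DGraph) (v : G.V) : Prop := (G.emit v).Infinite

end DGraph

/-- The extra generators `a_{v,S}` of the graph monoid: `v` an infinite emitter and
`S` a finite non-empty subset of `s⁻¹(v)`. -/
def InfGen (G : DGraph) : Type :=
  {x : G.V × Finset G.E // G.InfEmitter x.1 ∧ x.2.Nonempty ∧ ∀ e ∈ x.2, G.s e = x.1}

/-- The generators of the graph monoid `M̄_E`: one generator `a_v` per vertex, and one
generator `a_{v,S}` per infinite emitter `v` and finite non-empty `S ⊆ s⁻¹(v)`. -/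
abbrev MGen (G : DGraph) : Type := G.V ⊕ InfGen G

/-- The defining relations of the graph monoid `M̄_E` on the free commutative monoid
(`Multiset`) on the generators. -/
inductive MRel (G : DGraph) : Multiset (MGen G) → Multiset (MGen G) → Prop
  | reg (v : G.V) (h : (G.emit v).Finite) (hne : (G.emit v).Nonempty) :
      MRel G {Sum.inl v} (h.toFinset.val.map fun e => (Sum.inl (G.r e) : MGen G))
  | inf (x : InfGen G) :
      MRel G {Sum.inl x.1.1}
        ({Sum.inr x} + x.1.2.val.map fun e => (Sum.inl (G.r e) : MGen G))
  | exch (x y : InfGen G) : x.1.1 = y.1.1 →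
      MRel G
        ({Sum.inr x} + ((x.1.2 \ y.1.2).val.map fun e => (Sum.inl (G.r e) : MGen G)))
        ({Sum.inr y} + ((y.1.2 \ x.1.2).val.map fun e => (Sum.inl (G.r e) : MGen G)))

/-- The graph monoid `M̄_E` of a directed graph. -/
def Mbar (G : DGraph) : Type := (addConGen (MRel G)).Quotient

noncomputable instance (G : DGraph) : AddCommMonoid (Mbar G) := by
  unfold Mbar; infer_instance

/-- The generator `a_v` of `M̄_E`. -/
def genV (G : DGraph) (v : G.V) : Mbar G := (addConGen (MRel G)).mk' {Sum.inl v}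

/-- The generator `a_{v,S}` of `M̄_E`. -/
def genS (G : DGraph) (x : InfGen G) : Mbar G := (addConGen (MRel G)).mk' {Sum.inr x}

/-- A Leavitt `E`-family in a ring `A`: idempotents `p_v` and elements `t_e, t'_e`
satisfying the defining relations of the Leavitt path algebra. -/
structure LeavittFamily (G : DGraph) (A : Type) [NonUnitalRing A] where
  p : G.V → A
  t : G.E → A
  t' : G.E → A
  p_idem : ∀ v, p v * p v = p v
  p_orth : ∀ v w, v ≠ w → p v * p w = 0
  s_t : ∀ e, p (G.s e) * t e = t e
  t_r : ∀ e, t e * p (G.r e) = t e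
  r_t' : ∀ e, p (G.r e) * t' e = t' e
  t'_s : ∀ e, t' e * p (G.s e) = t' e
  t'_t : ∀ e, t' e * t e = p (G.r e)
  t'_t_orth : ∀ e f, e ≠ f → t' e * t f = 0
  reg : ∀ v (h : (G.emit v).Finite), (G.emit v).Nonempty →
      p v = ∑ e ∈ h.toFinset, t e * t' e


/-!
Each `t_e t_e^*` is an idempotent Murray–von Neumann equivalent to `p_{r(e)}` (via `t_e` and
`t_e^*`), and the `t_e t_e^*` for distinct edges are mutually orthogonal. For a finite set `S`
of edges out of `v` they lie under `p_v`, so `p_v - Σ_{e∈S} t_e t_e^*` is an idempotent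
orthogonal to each of them. Since orthogonal idempotents add in `V`, removing the edges of
`T ⊆ S` from `S` adds `Σ_{e∈T} [p_{r(e)}]` to the class of this idempotent. With `T = S` this
is the second relation of `M̄_E`; with `T = S \ S'` both sides of the third relation become
`[p_v - Σ_{e∈S∩S'} t_e t_e^*]`; the first relation is the Cuntz–Krieger relation at a regular
vertex.
-/

open Finset

section VMon

variable {R : Type} [NonUnitalRing R]

lemma pad_self {n : ℕ} (a : Mat R n) : pad n a = a := by
  ext i j
  simp [pad]

lemma of_fin_one_mul_of_fin_one (a b : R) :
    (of fun _ _ : Fin 1 => a) * (of fun _ _ : Fin 1 => b) = of fun _ _ : Fin 1 => a * b := by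
  ext i j
  simp [Matrix.mul_apply]

lemma IsIdempotentElem.of_fin_one {a : R} (h : IsIdempotentElem a) :
    IsIdempotentElem (of fun _ _ : Fin 1 => a) := by
  rw [IsIdempotentElem, of_fin_one_mul_of_fin_one, h.eq]

lemma mk'_eq_of_vRel {x y : Multiset (IdemMat R)} (h : VRel R x y) :
    (addConGen (VRel R)).mk' x = (addConGen (VRel R)).mk' y :=
  (AddCon.eq _).2 (AddConGen.Rel.of _ _ h)

lemma clsE_of_isIdempotentElem {a : R} (h : IsIdempotentElem a) :
    clsE a = cls ⟨1, _, h.of_fin_one⟩ :=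
  dif_pos _

lemma clsE_mul_comm {x y : R} (hxy : IsIdempotentElem (x * y))
    (hyx : IsIdempotentElem (y * x)) : clsE (x * y) = clsE (y * x) := by
  rw [clsE_of_isIdempotentElem hxy, clsE_of_isIdempotentElem hyx]
  refine mk'_eq_of_vRel (VRel.equiv _ _ ⟨1, le_rfl, le_rfl, of fun _ _ => x, of fun _ _ => y,
    ?_, ?_⟩) <;> rw [pad_self, of_fin_one_mul_of_fin_one]

lemma clsE_zero : clsE (0 : R) = 0 := by
  rw [clsE_of_isIdempotentElem IsIdempotentElem.zero]
  exact (mk'_eq_of_vRel (VRel.zero _ (by ext; simp))).trans (map_zero _)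

lemma dsum_of_fin_one (a b : R) :
    dsum (of fun _ _ : Fin 1 => a) (of fun _ _ : Fin 1 => b) = !![a, 0; 0, b] := by
  ext i j
  fin_cases i <;> fin_cases j <;> rfl

lemma pad_two_of_fin_one (a : R) : pad 2 (of fun _ _ : Fin 1 => a) = !![a, 0; 0, 0] := by
  ext i j
  fin_cases i <;> fin_cases j <;> simp [pad]

lemma clsE_add_of_orthogonal {a b : R} (ha : IsIdempotentElem a) (hb : IsIdempotentElem b)
    (hab : a * b = 0) (hba : b * a = 0) : clsE (a + b) = clsE a + clsE b := by
  have hdiag : IsIdempotentElem (!![a, 0; 0, b] : Mat R 2) := by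
    rw [IsIdempotentElem]
    ext i j
    fin_cases i <;> fin_cases j <;> simp [Matrix.mul_apply, ha.eq, hb.eq]
  have hsplit : clsE a + clsE b = cls ⟨2, _, hdiag⟩ := by
    rw [clsE_of_isIdempotentElem ha, clsE_of_isIdempotentElem hb]
    exact (map_add _ _ _).symm.trans <|
      mk'_eq_of_vRel (VRel.add _ _ _ rfl (heq_of_eq (dsum_of_fin_one a b).symm))
  rw [hsplit, clsE_of_isIdempotentElem (ha.add hb (by rw [hab, hba, add_zero]))]
  refine mk'_eq_of_vRel (VRel.equiv _ _ ⟨2, by norm_num, le_rfl,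
    !![a, b; 0, 0], !![a, 0; b, 0], ?_, ?_⟩)
  · rw [pad_two_of_fin_one]
    ext i j
    fin_cases i <;> fin_cases j <;> simp [Matrix.mul_apply, ha.eq, hb.eq]
  · rw [pad_self]
    ext i j
    fin_cases i <;> fin_cases j <;> simp [Matrix.mul_apply, ha.eq, hb.eq, hab, hba]

variable {ι : Type} {s : Finset ι} {f : ι → R}

lemma mul_sum_eq_zero_of_orthogonal {a : ι}
    (h : ∀ i ∈ insert a s, ∀ j ∈ insert a s, i ≠ j → f i * f j = 0) (has : a ∉ s) :
    f a * ∑ i ∈ s, f i = 0 ∧ (∑ i ∈ s, f i) * f a = 0 := by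
  rw [mul_sum, sum_mul]
  refine ⟨sum_eq_zero fun i hi => h a (mem_insert_self a s) i (mem_insert_of_mem hi) ?_,
    sum_eq_zero fun i hi => h i (mem_insert_of_mem hi) a (mem_insert_self a s) ?_⟩ <;>
    rintro rfl <;> contradiction

lemma isIdempotentElem_sum_of_orthogonal (hidem : ∀ i ∈ s, IsIdempotentElem (f i))
    (horth : ∀ i ∈ s, ∀ j ∈ s, i ≠ j → f i * f j = 0) :
    IsIdempotentElem (∑ i ∈ s, f i) := by
  induction s using Finset.induction_on with
  | empty => simp [IsIdempotentElem]
  | insert a s has ih =>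
    obtain ⟨hl, hr⟩ := mul_sum_eq_zero_of_orthogonal horth has
    rw [sum_insert has]
    exact (hidem a (mem_insert_self a s)).add (ih (fun i hi => hidem i (mem_insert_of_mem hi))
      fun i hi j hj => horth i (mem_insert_of_mem hi) j (mem_insert_of_mem hj))
      (by rw [hl, hr, add_zero])

lemma clsE_sum_of_orthogonal (hidem : ∀ i ∈ s, IsIdempotentElem (f i))
    (horth : ∀ i ∈ s, ∀ j ∈ s, i ≠ j → f i * f j = 0) :
    clsE (∑ i ∈ s, f i) = ∑ i ∈ s, clsE (f i) := by
  induction s using Finset.induction_on with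
  | empty => simpa using clsE_zero
  | insert a s has ih =>
    have hidem' i (hi : i ∈ s) := hidem i (mem_insert_of_mem hi)
    have horth' i (hi : i ∈ s) j (hj : j ∈ s) :=
      horth i (mem_insert_of_mem hi) j (mem_insert_of_mem hj)
    obtain ⟨hl, hr⟩ := mul_sum_eq_zero_of_orthogonal horth has
    rw [sum_insert has, sum_insert has, ← ih hidem' horth', clsE_add_of_orthogonal
      (hidem a (mem_insert_self a s)) (isIdempotentElem_sum_of_orthogonal hidem' horth') hl hr]

end VMon

namespace Mbar

variable {G : DGraph} {M : Type} [AddCommMonoid M]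

noncomputable def lift (g : MGen G → M)
    (hg : ∀ a b, MRel G a b → (a.map g).sum = (b.map g).sum) : Mbar G →+ M :=
  AddCon.lift _ (Multiset.sumAddMonoidHom.comp (Multiset.mapAddMonoidHom g))
    (AddCon.addConGen_le.2 fun a b h => (AddCon.ker_rel _).2 (hg a b h))

variable (g : MGen G → M) (hg : ∀ a b, MRel G a b → (a.map g).sum = (b.map g).sum)

lemma lift_genV (v : G.V) : lift g hg (genV G v) = g (Sum.inl v) :=
  (AddCon.lift_mk' _ _).trans (Multiset.sum_singleton _)

lemma lift_genS (x : InfGen G) : lift g hg (genS G x) = g (Sum.inr x) :=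
  (AddCon.lift_mk' _ _).trans (Multiset.sum_singleton _)

end Mbar

namespace LeavittFamily

variable {G : DGraph} {A : Type} [NonUnitalRing A] (L : LeavittFamily G A)

def rangeProj (e : G.E) : A := L.t e * L.t' e

lemma isIdempotentElem_rangeProj (e : G.E) : IsIdempotentElem (L.rangeProj e) := by
  rw [IsIdempotentElem, rangeProj, mul_assoc, ← mul_assoc (L.t' e), L.t'_t, ← mul_assoc, L.t_r]

lemma rangeProj_mul_rangeProj_of_ne {e f : G.E} (h : e ≠ f) :
    L.rangeProj e * L.rangeProj f = 0 := by
  rw [rangeProj, rangeProj, mul_assoc, ← mul_assoc (L.t' e), L.t'_t_orth e f h, zero_mul,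
    mul_zero]

lemma clsE_rangeProj (e : G.E) : clsE (L.rangeProj e) = clsE (L.p (G.r e)) := by
  have hp := L.p_idem (G.r e)
  rw [← L.t'_t e] at hp ⊢
  exact clsE_mul_comm (L.isIdempotentElem_rangeProj e) hp

lemma isIdempotentElem_sum_rangeProj (S : Finset G.E) :
    IsIdempotentElem (∑ e ∈ S, L.rangeProj e) :=
  isIdempotentElem_sum_of_orthogonal (fun e _ => L.isIdempotentElem_rangeProj e)
    fun _ _ _ _ h => L.rangeProj_mul_rangeProj_of_ne h

lemma clsE_sum_rangeProj (S : Finset G.E) :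
    clsE (∑ e ∈ S, L.rangeProj e) = ∑ e ∈ S, clsE (L.p (G.r e)) :=
  (clsE_sum_of_orthogonal (fun e _ => L.isIdempotentElem_rangeProj e)
    fun _ _ _ _ h => L.rangeProj_mul_rangeProj_of_ne h).trans
    (sum_congr rfl fun e _ => L.clsE_rangeProj e)

variable {v : G.V} {S : Finset G.E}

lemma p_mul_sum_rangeProj (hS : ∀ e ∈ S, G.s e = v) :
    L.p v * ∑ e ∈ S, L.rangeProj e = ∑ e ∈ S, L.rangeProj e := by
  rw [mul_sum]
  refine sum_congr rfl fun e he => ?_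
  rw [rangeProj, ← mul_assoc, ← hS e he, L.s_t]

lemma sum_rangeProj_mul_p (hS : ∀ e ∈ S, G.s e = v) :
    (∑ e ∈ S, L.rangeProj e) * L.p v = ∑ e ∈ S, L.rangeProj e := by
  rw [sum_mul]
  refine sum_congr rfl fun e he => ?_
  rw [rangeProj, mul_assoc, ← hS e he, L.t'_s]

lemma isIdempotentElem_p_sub_sum (hS : ∀ e ∈ S, G.s e = v) :
    IsIdempotentElem (L.p v - ∑ e ∈ S, L.rangeProj e) :=
  (L.isIdempotentElem_sum_rangeProj S).sub (L.p_idem v)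
    (L.sum_rangeProj_mul_p hS) (L.p_mul_sum_rangeProj hS)

lemma p_sub_sum_orthogonal_rangeProj (hS : ∀ e ∈ S, G.s e = v) {e : G.E} (he : e ∈ S) :
    (L.p v - ∑ f ∈ S, L.rangeProj f) * L.rangeProj e = 0 ∧
      L.rangeProj e * (L.p v - ∑ f ∈ S, L.rangeProj f) = 0 := by
  have hq := (L.isIdempotentElem_rangeProj e).eq
  have hpe := L.p_mul_sum_rangeProj (S := {e}) (by simpa using hS e he)
  have hep := L.sum_rangeProj_mul_p (S := {e}) (by simpa using hS e he)
  simp only [sum_singleton] at hpe hep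
  constructor
  · rw [sub_mul, hpe, sum_mul, sum_eq_single e (fun f _ hf => L.rangeProj_mul_rangeProj_of_ne hf)
      (absurd he), hq, sub_self]
  · rw [mul_sub, hep, mul_sum, sum_eq_single e
      (fun f _ hf => L.rangeProj_mul_rangeProj_of_ne hf.symm) (absurd he), hq, sub_self]

lemma clsE_p_sub_sum_add (hS : ∀ e ∈ S, G.s e = v) {T : Finset G.E} (hT : T ⊆ S) :
    clsE (L.p v - ∑ e ∈ S, L.rangeProj e) + ∑ e ∈ T, clsE (L.p (G.r e)) =
      clsE (L.p v - ∑ e ∈ S \ T, L.rangeProj e) := by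
  have horth e (he : e ∈ T) := L.p_sub_sum_orthogonal_rangeProj hS (hT he)
  have hl : (L.p v - ∑ e ∈ S, L.rangeProj e) * ∑ e ∈ T, L.rangeProj e = 0 := by
    rw [mul_sum]
    exact sum_eq_zero fun e he => (horth e he).1
  have hr : (∑ e ∈ T, L.rangeProj e) * (L.p v - ∑ e ∈ S, L.rangeProj e) = 0 := by
    rw [sum_mul]
    exact sum_eq_zero fun e he => (horth e he).2
  rw [← L.clsE_sum_rangeProj, ← clsE_add_of_orthogonal (L.isIdempotentElem_p_sub_sum hS)
    (L.isIdempotentElem_sum_rangeProj T) hl hr,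
    ← sum_sdiff hT, sub_add_eq_sub_sub, sub_add_cancel]

noncomputable def gammaGen : MGen G → VMon A
  | Sum.inl v => clsE (L.p v)
  | Sum.inr x => clsE (L.p x.1.1 - ∑ e ∈ x.1.2, L.rangeProj e)

lemma sum_map_gammaGen_ranges (S : Finset G.E) :
    ((S.val.map fun e => (Sum.inl (G.r e) : MGen G)).map L.gammaGen).sum =
      ∑ e ∈ S, clsE (L.p (G.r e)) := by
  rw [Multiset.map_map]
  rfl

lemma gammaGen_respects {a b : Multiset (MGen G)} (h : MRel G a b) :
    (a.map L.gammaGen).sum = (b.map L.gammaGen).sum := by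
  cases h <;>
    simp only [Multiset.map_add, Multiset.sum_add, Multiset.map_singleton,
      Multiset.sum_singleton, sum_map_gammaGen_ranges, gammaGen]
  case reg v hfin hne =>
    rw [← L.clsE_sum_rangeProj]
    exact congrArg clsE (L.reg v hfin hne)
  case inf x =>
    rw [L.clsE_p_sub_sum_add x.2.2.2 subset_rfl, Finset.sdiff_self, sum_empty, sub_zero]
  case exch x y hxy =>
    rw [L.clsE_p_sub_sum_add x.2.2.2 sdiff_subset, L.clsE_p_sub_sum_add y.2.2.2 sdiff_subset,
      sdiff_sdiff_self_left, sdiff_sdiff_self_left, inter_comm, hxy]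

noncomputable def gamma : Mbar G →+ VMon A := Mbar.lift L.gammaGen fun _ _ => L.gammaGen_respects

end LeavittFamily

theorem gamma_monoid_hom_exists_general (G : DGraph)
    (A : Type) [NonUnitalRing A] (L : LeavittFamily G A) :
    (∀ v : G.V, IsIdempotentElem (L.p v)) ∧
    (∀ x : InfGen G,
      IsIdempotentElem (L.p x.1.1 - ∑ e ∈ x.1.2, L.t e * L.t' e)) ∧
    ∃ γ : Mbar G →+ VMon A,
      (∀ v : G.V, γ (genV G v) = clsE (L.p v)) ∧
      (∀ x : InfGen G,
        γ (genS G x) = clsE (L.p x.1.1 - ∑ e ∈ x.1.2, L.t e * L.t' e)) :=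
  ⟨L.p_idem, fun x => L.isIdempotentElem_p_sub_sum x.2.2.2, L.gamma,
    Mbar.lift_genV _ _, Mbar.lift_genS _ _⟩

/-- Let `E` be a (possibly uncountable) directed graph and `K` a field,
with Leavitt path algebra `L_K(E)` generated by a Leavitt `E`-family `{p_v, t_e, t_e^*}`.
Then there is a well-defined monoid homomorphism `γ_E : M̄_E → V[L_K(E)]` sending the
generator `a_v` to `[p_v]` for each vertex `v`, and sending `a_{v,S}` to
`[p_v − Σ_{e∈S} t_e t_e^*]` for each infinite emitter `v` and finite non-empty
`S ⊆ s⁻¹(v)`; in particular these elements are idempotents. -/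
theorem gamma_monoid_hom_exists (K : Type) [Field K] (G : DGraph)
    (A : Type) [NonUnitalRing A] [Module K A] (L : LeavittFamily G A) :
    (∀ v : G.V, IsIdempotentElem (L.p v)) ∧
    (∀ x : InfGen G,
      IsIdempotentElem (L.p x.1.1 - ∑ e ∈ x.1.2, L.t e * L.t' e)) ∧
    ∃ γ : Mbar G →+ VMon A,
      (∀ v : G.V, γ (genV G v) = clsE (L.p v)) ∧
      (∀ x : InfGen G,
        γ (genS G x) = clsE (L.p x.1.1 - ∑ e ∈ x.1.2, L.t e * L.t' e)) :=
  gamma_monoid_hom_exists_general G A L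
end

section
/- Let E be a (possibly uncountable) directed graph. Then E is the direct limit, in the category of graphs with CK-morphisms, of a directed system of countable subgraphs, and consequently the graph monoid M̄_E is the direct limit of the graph monoids M̄_{E_i}: the canonical map ψ from the colimit of the M̄_{E_i} to M̄_{E_∞} induced by the maps M̄(φ_{i,∞}) is a monoid isomorphism. -/
attribute [local instance] Classical.propDecidable

/-- A CK-morphism of directed graphs: a graph morphism that is injective on vertices and
edges and restricts to a bijection `s⁻¹(v) → s⁻¹(η(v))` at every regular vertex `v`. -/
structure CKHom (G H : DGraph) where
  fV : G.V → H.V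
  fE : G.E → H.E
  injV : Function.Injective fV
  injE : Function.Injective fE
  hs : ∀ e, H.s (fE e) = fV (G.s e)
  hr : ∀ e, H.r (fE e) = fV (G.r e)
  reg_surj : ∀ v, G.Regular v → ∀ f, H.s f = fV v → ∃ e, G.s e = v ∧ fE e = f

/-!
Call a countable subgraph `F` of `E` a CK-subgraph if, for each vertex `v` of `F`, it contains
all edges emitted by `v` when there are finitely many of them and infinitely many of them
otherwise. Then `F → E` is a CK-morphism, and every countable
set of vertices and edges lies in an admissible subgraph (close it up in countably many steps),
so the CK-subgraphs form a directed system with union `E`.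

`M̄_E` is the free commutative monoid on the generators modulo relations each of which involves
only finitely many vertices and edges. Hence every element of `M̄_E`, and every derivation of an
equality in `M̄_E`, already lives in some CK-subgraph; as CK-morphisms are injective on
generators, this makes the colimit map surjective and injective.
-/

theorem Set.exists_countable_subset_eq_of_finite {α : Type*} (s : Set α) :
    ∃ t ⊆ s, t.Countable ∧ (t.Finite → t = s) := by
  by_cases hs : s.Finite
  · exact ⟨s, subset_rfl, hs.countable, fun _ => rfl⟩
  · obtain ⟨t, hts, htc, hti⟩ := Set.Infinite.exists_subset_countable_infinite hs
    exact ⟨t, hts, htc, fun ht => absurd ht hti⟩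

theorem Set.exists_countable_superset_forall_subset {α : Type*} (N : α → Set α)
    (hN : ∀ a, (N a).Countable) {S : Set α} (hS : S.Countable) :
    ∃ T, S ⊆ T ∧ T.Countable ∧ ∀ a ∈ T, N a ⊆ T := by
  set step : Set α → Set α := fun A => A ∪ ⋃ a ∈ A, N a
  have step_countable : ∀ n, (step^[n] S).Countable := by
    intro n
    induction n with
    | zero => exact hS
    | succ n ih =>
      rw [Function.iterate_succ_apply']
      exact ih.union (ih.biUnion fun a _ => hN a)
  refine ⟨⋃ n, step^[n] S, Set.subset_iUnion (fun n => step^[n] S) 0,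
    Set.countable_iUnion step_countable, fun a ha => ?_⟩
  obtain ⟨n, hn⟩ := Set.mem_iUnion.1 ha
  refine Set.Subset.trans ?_ (Set.subset_iUnion _ (n + 1))
  rw [Function.iterate_succ_apply']
  exact Set.subset_union_of_subset_right (Set.subset_biUnion_of_mem hn) _

namespace CKHom

variable {A B : DGraph} (η : CKHom A B)

lemma infEmitter {v : A.V} (hv : A.InfEmitter v) : B.InfEmitter (η.fV v) := by
  refine Set.Infinite.mono ?_ (hv.image η.injE.injOn)
  rintro f ⟨e, he, rfl⟩
  exact (η.hs e).trans (congrArg η.fV he)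

/-- The generator `a_{η(v), η(S)}` of `M̄_B` corresponding to `a_{v,S}`. -/
noncomputable def mapInfGen (x : InfGen A) : InfGen B :=
  ⟨(η.fV x.1.1, x.1.2.image η.fE), η.infEmitter x.2.1, x.2.2.1.image _, by
    intro f hf
    obtain ⟨e, he, rfl⟩ := Finset.mem_image.1 hf
    rw [η.hs, x.2.2.2 e he]⟩

lemma mapInfGen_injective : Function.Injective η.mapInfGen := by
  intro x y h
  have hv : η.fV x.1.1 = η.fV y.1.1 := congrArg (fun z : InfGen B => z.1.1) h
  have hS : x.1.2.image η.fE = y.1.2.image η.fE := congrArg (fun z : InfGen B => z.1.2) h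
  exact Subtype.ext (Prod.ext (η.injV hv) (Finset.image_injective η.injE hS))

noncomputable def mapGen : MGen A → MGen B := Sum.map η.fV η.mapInfGen

lemma mapGen_injective : Function.Injective η.mapGen :=
  Sum.map_injective.2 ⟨η.injV, η.mapInfGen_injective⟩

lemma image_emit_toFinset {v : A.V} (hv : A.Regular v) (hB : (B.emit (η.fV v)).Finite) :
    hv.1.toFinset.image η.fE = hB.toFinset := by
  ext f
  simp only [Finset.mem_image, Set.Finite.mem_toFinset, DGraph.emit, Set.mem_ofPred_eq]
  constructor
  · rintro ⟨e, he, rfl⟩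
    rw [η.hs, he]
  · exact η.reg_surj v hv f

lemma map_mapGen_edgeRanges (S : Finset A.E) :
    (S.val.map fun e => (Sum.inl (A.r e) : MGen A)).map η.mapGen =
      (S.image η.fE).val.map fun e => (Sum.inl (B.r e) : MGen B) := by
  rw [Finset.image_val_of_injOn η.injE.injOn, Multiset.map_map, Multiset.map_map]
  refine Multiset.map_congr rfl fun e _ => ?_
  simp [mapGen, η.hr]

end CKHom

namespace Mbar

variable {A B : DGraph}

def mk (G : DGraph) (m : Multiset (MGen G)) : Mbar G := (addConGen (MRel G)).mk' m

lemma mk_surjective (G : DGraph) : Function.Surjective (mk G) := AddCon.mk'_surjective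

lemma mk_add (G : DGraph) (a b : Multiset (MGen G)) : mk G (a + b) = mk G a + mk G b :=
  map_add _ a b

lemma mk_eq_mk_iff (G : DGraph) (a b : Multiset (MGen G)) :
    mk G a = mk G b ↔ AddConGen.Rel (MRel G) a b := by
  change (addConGen (MRel G)).mk' a = (addConGen (MRel G)).mk' b ↔ _
  rw [AddCon.coe_mk', AddCon.eq]
  rfl

lemma map_mk_of_gen (η : CKHom A B) (F : Mbar A →+ Mbar B)
    (hV : ∀ v, F (genV A v) = genV B (η.fV v))
    (hS : ∀ x, F (genS A x) = genS B (η.mapInfGen x)) (m : Multiset (MGen A)) :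
    F (mk A m) = mk B (m.map η.mapGen) := by
  induction m using Multiset.induction_on with
  | empty => exact (map_zero F).trans (map_zero (addConGen (MRel B)).mk').symm
  | cons g m ih =>
    rw [← Multiset.singleton_add, Multiset.map_add, mk_add, mk_add, map_add, ih]
    congr 1
    cases g with
    | inl v => exact hV v
    | inr x => exact hS x

end Mbar

namespace DGraph

variable (G : DGraph)

/-- A countable set of edges emitted by `v`: all of them if there are finitely many, and
infinitely many otherwise. -/
noncomputable def emitCore (v : G.V) : Set G.E :=
  (Set.exists_countable_subset_eq_of_finite (G.emit v)).choose

lemma emitCore_subset (v : G.V) : G.emitCore v ⊆ G.emit v :=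
  (Set.exists_countable_subset_eq_of_finite (G.emit v)).choose_spec.1

lemma emitCore_countable (v : G.V) : (G.emitCore v).Countable :=
  (Set.exists_countable_subset_eq_of_finite (G.emit v)).choose_spec.2.1

lemma emitCore_eq_of_finite {v : G.V} (h : (G.emitCore v).Finite) : G.emitCore v = G.emit v :=
  (Set.exists_countable_subset_eq_of_finite (G.emit v)).choose_spec.2.2 h

end DGraph

/-- Countable subgraphs of `G` whose inclusion into `G` is a CK-morphism; `emitCore_subset` is
what makes it one. -/
structure CountableCKSubgraph (G : DGraph) where
  V : Set G.V
  E : Set G.E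
  countable_V : V.Countable
  countable_E : E.Countable
  s_mem : ∀ e ∈ E, G.s e ∈ V
  r_mem : ∀ e ∈ E, G.r e ∈ V
  emitCore_subset : ∀ v ∈ V, G.emitCore v ⊆ E

namespace CountableCKSubgraph

open Filter

variable {G : DGraph} (i j : CountableCKSubgraph G)

instance : Preorder (CountableCKSubgraph G) := Preorder.lift fun i => (i.V, i.E)

def toDGraph : DGraph where
  V := i.V
  E := i.E
  s e := ⟨G.s e, i.s_mem e e.2⟩
  r e := ⟨G.r e, i.r_mem e e.2⟩

lemma emit_toDGraph (v : i.toDGraph.V) : i.toDGraph.emit v = Subtype.val ⁻¹' G.emit v.1 := by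
  ext e
  exact Subtype.ext_iff

lemma emit_subset_of_finite {v : G.V} (hv : v ∈ i.V) (h : (G.emit v).Finite) :
    G.emit v ⊆ i.E := by
  rw [← G.emitCore_eq_of_finite (h.subset (G.emitCore_subset v))]
  exact i.emitCore_subset v hv

lemma infinite_emit_toDGraph (v : i.toDGraph.V) (h : G.InfEmitter v.1) :
    i.toDGraph.InfEmitter v := by
  have hcore : (G.emitCore v.1).Infinite := fun hfin =>
    h (G.emitCore_eq_of_finite hfin ▸ hfin)
  refine Set.Infinite.of_image Subtype.val (hcore.mono fun e he => ?_)
  refine ⟨⟨e, i.emitCore_subset v.1 v.2 he⟩, ?_, rfl⟩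
  rw [emit_toDGraph]
  exact G.emitCore_subset v.1 he

lemma regular_toDGraph_iff (v : i.toDGraph.V) : i.toDGraph.Regular v ↔ G.Regular v.1 := by
  rw [DGraph.Regular, DGraph.Regular, emit_toDGraph]
  constructor
  · rintro ⟨hfin, ⟨e, he⟩⟩
    refine ⟨Set.not_infinite.1 fun h => ?_, e.1, he⟩
    exact i.infinite_emit_toDGraph v h (by rwa [emit_toDGraph])
  · rintro ⟨hfin, ⟨e, he⟩⟩
    exact ⟨hfin.preimage Subtype.val_injective.injOn,
      ⟨e, i.emit_subset_of_finite v.2 hfin he⟩, he⟩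

lemma mem_E_of_regular {v : i.toDGraph.V} (hv : i.toDGraph.Regular v) {f : G.E}
    (hf : G.s f = v.1) : f ∈ i.E :=
  i.emit_subset_of_finite v.2 ((i.regular_toDGraph_iff v).1 hv).1 hf

def incl : CKHom i.toDGraph G where
  fV := Subtype.val
  fE := Subtype.val
  injV := Subtype.val_injective
  injE := Subtype.val_injective
  hs _ := rfl
  hr _ := rfl
  reg_surj _ hv f hf := ⟨⟨f, i.mem_E_of_regular hv hf⟩, Subtype.ext hf, rfl⟩

variable {i j}

def inclOfLE (h : i ≤ j) : CKHom i.toDGraph j.toDGraph where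
  fV v := ⟨v.1, h.1 v.2⟩
  fE e := ⟨e.1, h.2 e.2⟩
  injV _ _ hvw := Subtype.ext (Subtype.mk.inj hvw)
  injE _ _ hef := Subtype.ext (Subtype.mk.inj hef)
  hs _ := rfl
  hr _ := rfl
  reg_surj v hv f hf := by
    have hf' : G.s f.1 = v.1 := congrArg Subtype.val hf
    exact ⟨⟨f.1, i.mem_E_of_regular hv hf'⟩, Subtype.ext hf', rfl⟩

lemma incl_mapGen_inclOfLE (h : i ≤ j) (g : MGen i.toDGraph) :
    j.incl.mapGen ((inclOfLE h).mapGen g) = i.incl.mapGen g := by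
  cases g with
  | inl v => rfl
  | inr x =>
    refine congrArg Sum.inr (Subtype.ext (Prod.ext rfl ?_))
    exact Finset.image_image

lemma map_inclOfLE_eq {h : i ≤ j} {m : Multiset (MGen i.toDGraph)}
    {m' : Multiset (MGen j.toDGraph)} (hm : m'.map j.incl.mapGen = m.map i.incl.mapGen) :
    m.map (inclOfLE h).mapGen = m' := by
  refine Multiset.map_injective j.incl.mapGen_injective ?_
  rw [hm, Multiset.map_map]
  exact Multiset.map_congr rfl fun g _ => incl_mapGen_inclOfLE h g

/-- Close `X ∪ Y`, inside `G.V ⊕ G.E`, under `e ↦ {s e, r e}` and `v ↦ emitCore v`. -/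
theorem exists_le {X : Set G.V} {Y : Set G.E} (hX : X.Countable) (hY : Y.Countable) :
    ∃ i : CountableCKSubgraph G, X ⊆ i.V ∧ Y ⊆ i.E := by
  let N : G.V ⊕ G.E → Set (G.V ⊕ G.E) :=
    Sum.elim (fun v => Sum.inr '' G.emitCore v) (fun e => {Sum.inl (G.s e), Sum.inl (G.r e)})
  have hN : ∀ a, (N a).Countable := by
    rintro (v | e)
    · exact (G.emitCore_countable v).image _
    · exact (Set.countable_singleton _).insert _
  obtain ⟨T, hST, hT, hNT⟩ := Set.exists_countable_superset_forall_subset N hN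
    ((hX.image Sum.inl).union (hY.image Sum.inr))
  refine ⟨⟨Sum.inl ⁻¹' T, Sum.inr ⁻¹' T, hT.preimage Sum.inl_injective,
    hT.preimage Sum.inr_injective, fun e he => hNT (Sum.inr e) he (Or.inl rfl),
    fun e he => hNT (Sum.inr e) he (Or.inr rfl),
    fun v hv e he => hNT (Sum.inl v) hv ⟨e, he, rfl⟩⟩,
    fun v hv => hST (Or.inl ⟨v, hv, rfl⟩), fun e he => hST (Or.inr ⟨e, he, rfl⟩)⟩

instance : IsDirected (CountableCKSubgraph G) (· ≤ ·) where
  directed i j :=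
    let ⟨k, hV, hE⟩ := exists_le (i.countable_V.union j.countable_V)
      (i.countable_E.union j.countable_E)
    ⟨k, ⟨Set.subset_union_left.trans hV, Set.subset_union_left.trans hE⟩,
      ⟨Set.subset_union_right.trans hV, Set.subset_union_right.trans hE⟩⟩

instance : Nonempty (CountableCKSubgraph G) :=
  let ⟨i, _⟩ := exists_le (G := G) Set.countable_empty Set.countable_empty
  ⟨i⟩

lemma eventually_subset {X : Set G.V} {Y : Set G.E} (hX : X.Countable) (hY : Y.Countable) :
    ∀ᶠ i : CountableCKSubgraph G in atTop, X ⊆ i.V ∧ Y ⊆ i.E :=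
  let ⟨i, hV, hE⟩ := exists_le hX hY
  (eventually_ge_atTop i).mono fun _ hj => ⟨hV.trans hj.1, hE.trans hj.2⟩

lemma eventually_mem_V (v : G.V) : ∀ᶠ i : CountableCKSubgraph G in atTop, v ∈ i.V :=
  (eventually_subset (Set.countable_singleton v) Set.countable_empty).mono
    fun _ h => h.1 rfl

lemma eventually_mem_E (e : G.E) : ∀ᶠ i : CountableCKSubgraph G in atTop, e ∈ i.E :=
  (eventually_subset Set.countable_empty (Set.countable_singleton e)).mono
    fun _ h => h.2 rfl

lemma eventually_mem_range_mapInfGen (x : InfGen G) :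
    ∀ᶠ i : CountableCKSubgraph G in atTop, x ∈ Set.range i.incl.mapInfGen := by
  filter_upwards [eventually_subset (Set.countable_singleton x.1.1) x.1.2.countable_toSet]
    with i ⟨hv, hS⟩
  have hS' : ∀ e ∈ x.1.2, e ∈ i.E := fun e he => hS he
  refine ⟨⟨(⟨x.1.1, hv rfl⟩, x.1.2.subtype (· ∈ i.E)),
    i.infinite_emit_toDGraph _ x.2.1, ?_, fun e he => ?_⟩, ?_⟩
  · obtain ⟨e, he⟩ := x.2.2.1
    exact ⟨⟨e, hS' e he⟩, Finset.mem_subtype.2 he⟩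
  · exact Subtype.ext (x.2.2.2 e.1 (Finset.mem_subtype.1 he))
  · refine Subtype.ext (Prod.ext rfl ?_)
    exact (Finset.map_eq_image _ _).symm.trans (Finset.subtype_map_of_mem hS')

lemma eventually_mem_range_mapGen (g : MGen G) :
    ∀ᶠ i : CountableCKSubgraph G in atTop, g ∈ Set.range i.incl.mapGen := by
  cases g with
  | inl v => exact (eventually_mem_V v).mono fun i hv => ⟨Sum.inl ⟨v, hv⟩, rfl⟩
  | inr x =>
    exact (eventually_mem_range_mapInfGen x).mono fun i ⟨x', hx'⟩ =>
      ⟨Sum.inr x', congrArg Sum.inr hx'⟩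

lemma eventually_mem_range_map (m : Multiset (MGen G)) :
    ∀ᶠ i : CountableCKSubgraph G in atTop, m ∈ Set.range (Multiset.map i.incl.mapGen) := by
  induction m using Multiset.induction_on with
  | empty => exact Eventually.of_forall fun i => ⟨0, Multiset.map_zero _⟩
  | cons g m ih =>
    filter_upwards [eventually_mem_range_mapGen g, ih] with i ⟨g', hg'⟩ ⟨m', hm'⟩
    exact ⟨g' ::ₘ m', by rw [Multiset.map_cons, hg', hm']⟩

def LiftsRel (i : CountableCKSubgraph G) (a b : Multiset (MGen G)) : Prop :=
  ∃ a' b', AddConGen.Rel (MRel i.toDGraph) a' b' ∧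
    a'.map i.incl.mapGen = a ∧ b'.map i.incl.mapGen = b

lemma eventually_liftsRel_of_mRel {a b : Multiset (MGen G)} (h : MRel G a b) :
    ∀ᶠ i : CountableCKSubgraph G in atTop, i.LiftsRel a b := by
  cases h with
  | reg v hfin hne =>
    filter_upwards [eventually_mem_V v] with i hv
    have hreg : i.toDGraph.Regular ⟨v, hv⟩ := (i.regular_toDGraph_iff _).2 ⟨hfin, hne⟩
    refine ⟨_, _, .of _ _ (MRel.reg (G := i.toDGraph) ⟨v, hv⟩ hreg.1 hreg.2), rfl, ?_⟩
    rw [CKHom.map_mapGen_edgeRanges, i.incl.image_emit_toFinset hreg hfin]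
    rfl
  | inf x =>
    filter_upwards [eventually_mem_range_mapInfGen x] with i ⟨x', hx'⟩
    subst hx'
    refine ⟨_, _, .of _ _ (MRel.inf x'), rfl, ?_⟩
    rw [Multiset.map_add, CKHom.map_mapGen_edgeRanges]
    rfl
  | exch x y hxy =>
    filter_upwards [eventually_mem_range_mapInfGen x, eventually_mem_range_mapInfGen y]
      with i ⟨x', hx'⟩ ⟨y', hy'⟩
    subst hx' hy'
    refine ⟨_, _, .of _ _ (MRel.exch x' y' (i.incl.injV hxy)), ?_, ?_⟩ <;>
      rw [Multiset.map_add, CKHom.map_mapGen_edgeRanges, Finset.image_sdiff _ _ i.incl.injE] <;>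
      rfl

lemma eventually_liftsRel {a b : Multiset (MGen G)} (h : AddConGen.Rel (MRel G) a b) :
    ∀ᶠ i : CountableCKSubgraph G in atTop, i.LiftsRel a b := by
  induction h with
  | of a b h => exact eventually_liftsRel_of_mRel h
  | refl a =>
    exact (eventually_mem_range_map a).mono fun i ⟨a', ha'⟩ => ⟨a', a', .refl a', ha', ha'⟩
  | symm _ ih => exact ih.mono fun i ⟨a', b', h, ha, hb⟩ => ⟨b', a', h.symm, hb, ha⟩
  | trans _ _ ih₁ ih₂ =>
    filter_upwards [ih₁, ih₂] with i ⟨a', b', hab, ha, hb⟩ ⟨b'', c', hbc, hb', hc⟩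
    obtain rfl : b' = b'' := Multiset.map_injective i.incl.mapGen_injective (hb.trans hb'.symm)
    exact ⟨a', c', hab.trans hbc, ha, hc⟩
  | add _ _ ih₁ ih₂ =>
    filter_upwards [ih₁, ih₂] with i ⟨a', b', h₁, ha, hb⟩ ⟨c', d', h₂, hc, hd⟩
    exact ⟨a' + c', b' + d', h₁.add h₂, by rw [Multiset.map_add, ha, hc],
      by rw [Multiset.map_add, hb, hd]⟩

end CountableCKSubgraph

/-- Every (possibly uncountable) directed graph `E` is the direct limit,
in the category of graphs with CK-morphisms, of a directed system of countable graphs, and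
the graph monoid functor `M̄` is continuous: the canonical map from the colimit of the
`M̄_{E_i}` to `M̄_E` is a monoid isomorphism — equivalently, for any family of induced
monoid maps `M̄(φ_{ij})`, `M̄(φ_{i,∞})`, the maps `M̄(φ_{i,∞})` are jointly surjective and
identify exactly the eventually equal elements. -/
theorem Mbar_continuous (G : DGraph) :
    ∃ (I : Type) (_ : Preorder I) (_ : IsDirected I (· ≤ ·))
      (Gi : I → DGraph) (φ : ∀ i j, i ≤ j → CKHom (Gi i) (Gi j))
      (ψ : ∀ i, CKHom (Gi i) G),
      (∀ i, Countable (Gi i).V ∧ Countable (Gi i).E) ∧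
      (∀ i j (h : i ≤ j) (v : (Gi i).V), (ψ j).fV ((φ i j h).fV v) = (ψ i).fV v) ∧
      (∀ i j (h : i ≤ j) (e : (Gi i).E), (ψ j).fE ((φ i j h).fE e) = (ψ i).fE e) ∧
      (∀ v : G.V, ∃ (i : I) (w : (Gi i).V), (ψ i).fV w = v) ∧
      (∀ e : G.E, ∃ (i : I) (f : (Gi i).E), (ψ i).fE f = e) ∧
      (∀ (Mφ : ∀ i j, i ≤ j → (Mbar (Gi i) →+ Mbar (Gi j)))
         (Mψ : ∀ i, Mbar (Gi i) →+ Mbar G),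
        (∀ i j (h : i ≤ j) (v : (Gi i).V),
          Mφ i j h (genV (Gi i) v) = genV (Gi j) ((φ i j h).fV v)) →
        (∀ i j (h : i ≤ j) (x : InfGen (Gi i)) (y : InfGen (Gi j)),
          y.1.1 = (φ i j h).fV x.1.1 → y.1.2 = x.1.2.image (φ i j h).fE →
          Mφ i j h (genS (Gi i) x) = genS (Gi j) y) →
        (∀ i (v : (Gi i).V), Mψ i (genV (Gi i) v) = genV G ((ψ i).fV v)) →
        (∀ i (x : InfGen (Gi i)) (y : InfGen G),
          y.1.1 = (ψ i).fV x.1.1 → y.1.2 = x.1.2.image (ψ i).fE →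
          Mψ i (genS (Gi i) x) = genS G y) →
        ((∀ z : Mbar G, ∃ (i : I) (x : Mbar (Gi i)), Mψ i x = z) ∧
         (∀ i (x y : Mbar (Gi i)), Mψ i x = Mψ i y →
            ∃ (j : I) (h : i ≤ j), Mφ i j h x = Mφ i j h y))) := by
  open CountableCKSubgraph in
  refine ⟨CountableCKSubgraph G, inferInstance, inferInstance, toDGraph, fun _ _ => inclOfLE,
    incl, fun i => ⟨i.countable_V.to_subtype, i.countable_E.to_subtype⟩,
    fun _ _ _ _ => rfl, fun _ _ _ _ => rfl,
    fun v => (eventually_mem_V v).exists.imp fun i hv => ⟨⟨v, hv⟩, rfl⟩,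
    fun e => (eventually_mem_E e).exists.imp fun i he => ⟨⟨e, he⟩, rfl⟩, ?_⟩
  intro Mφ Mψ hφV hφS hψV hψS
  have hψ : ∀ i m, Mψ i (Mbar.mk _ m) = Mbar.mk G (m.map (incl i).mapGen) := fun i =>
    Mbar.map_mk_of_gen _ _ (hψV i) fun x => hψS i x _ rfl rfl
  have hφ : ∀ i j (h : i ≤ j) m, Mφ i j h (Mbar.mk _ m) = Mbar.mk _ (m.map (inclOfLE h).mapGen) :=
    fun i j h => Mbar.map_mk_of_gen _ _ (hφV i j h) fun x => hφS i j h x _ rfl rfl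
  refine ⟨fun z => ?_, fun i x y hxy => ?_⟩
  · obtain ⟨m, rfl⟩ := Mbar.mk_surjective G z
    obtain ⟨i, m', rfl⟩ := (eventually_mem_range_map m).exists
    exact ⟨i, _, hψ i m'⟩
  · obtain ⟨m, rfl⟩ := Mbar.mk_surjective _ x
    obtain ⟨n, rfl⟩ := Mbar.mk_surjective _ y
    rw [hψ, hψ, Mbar.mk_eq_mk_iff] at hxy
    obtain ⟨j, ⟨m', n', hrel, hm, hn⟩, hij⟩ :=
      ((eventually_liftsRel hxy).and (Filter.eventually_ge_atTop i)).exists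
    refine ⟨j, hij, ?_⟩
    rwa [hφ, hφ, Mbar.mk_eq_mk_iff, map_inclOfLE_eq hm, map_inclOfLE_eq hn]
end
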